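/- arXiv:2104.01415 — 2 statements merged into one kernel-verified Lean document; each statement's English description precedes it below -/
import Mathlib

section
/- The limit as N → ∞ of the q-Hahn weight W_{√(ξs/κ), s}(N - μ_1, i; N - λ_1 + i, Δ) equals (κs/ξ)^Δ · (κs/ξ;q)_∞/(s²;q)_∞ · (κ^{-1}sξ;q)_Δ/(q;q)_Δ, where Δ = λ_1 - μ_1 is fixed and μ_1 ≤ λ_1; convergence holds for |q| < 1. -/
/-- The q-Pochhammer symbol `(x;q)_n = ∏_{i=1}^n (1 - x q^{i-1})`. -/
noncomputable def qp (q x : ℂ) (n : ℕ) : ℂ := ∏ r ∈ Finset.range n, (1 - x * q ^ r)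

/-- The infinite q-Pochhammer symbol `(x;q)_∞ = ∏_{i=1}^∞ (1 - x q^{i-1})`. -/
noncomputable def qpInf (q x : ℂ) : ℂ := ∏' n : ℕ, (1 - x * q ^ n)

/-- The q-Hahn weight `W_{√(ξs/κ), s}(i,j;k,l)`, written in terms of
`s²/t² = κs/ξ` and `t² = sξ/κ`. -/
noncomputable def Wk (q κ s ξ : ℂ) (i j k l : ℕ) : ℂ :=
  if i + j = k + l ∧ l ≤ i then
    (κ * s / ξ) ^ l * qp q (κ * s / ξ) (i - l) * qp q (κ⁻¹ * s * ξ) l / qp q (s ^ 2) i *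
      (qp q q i / (qp q q (i - l) * qp q q l))
  else 0

/-!
Once `N ≥ λ₁`, both indicator conditions of the weight hold, and it is a factor independent
of `N` times `(κs/ξ;q)_{N-λ₁} (q;q)_{N-μ₁} / ((s²;q)_{N-μ₁} (q;q)_{N-λ₁})`. For `|q| < 1`
the series `∑ |x qⁿ|` converges, so each finite q-Pochhammer symbol tends to its infinite
counterpart, and `(s²;q)_∞` and `(q;q)_∞` are nonzero because none of their factors vanishes.
-/

open Filter Topology

section QPochhammer

variable {q : ℂ} (x : ℂ)

lemma summable_norm_neg_mul_pow (hq : ‖q‖ < 1) :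
    Summable fun n : ℕ => ‖-(x * q ^ n)‖ := by
  simpa [norm_mul, norm_pow] using
    (summable_geometric_of_lt_one (norm_nonneg q) hq).mul_left ‖x‖

lemma multipliable_one_sub_mul_pow (hq : ‖q‖ < 1) :
    Multipliable fun n : ℕ => 1 - x * q ^ n := by
  simpa [sub_eq_add_neg] using multipliable_one_add_of_summable (summable_norm_neg_mul_pow x hq)

lemma tendsto_qp_qpInf (hq : ‖q‖ < 1) : Tendsto (qp q x) atTop (𝓝 (qpInf q x)) :=
  (multipliable_one_sub_mul_pow x hq).hasProd.tendsto_prod_nat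

lemma qpInf_ne_zero (hq : ‖q‖ < 1) (hx : ∀ n : ℕ, 1 - x * q ^ n ≠ 0) :
    qpInf q x ≠ 0 := by
  simpa [qpInf, sub_eq_add_neg] using
    tprod_one_add_ne_zero_of_summable (by simpa [sub_eq_add_neg] using hx)
      (summable_norm_neg_mul_pow x hq)

lemma one_sub_self_mul_pow_ne_zero (hq : ‖q‖ < 1) (n : ℕ) : 1 - q * q ^ n ≠ 0 := by
  rw [← pow_succ', sub_ne_zero]
  intro h
  exact (pow_lt_one₀ (norm_nonneg q) hq n.succ_ne_zero).ne (by simpa using congrArg norm h.symm)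

lemma qp_self_ne_zero (hq : ‖q‖ < 1) (n : ℕ) : qp q q n ≠ 0 :=
  Finset.prod_ne_zero_iff.2 fun r _ => one_sub_self_mul_pow_ne_zero hq r

end QPochhammer

lemma Wk_add_add (q κ s ξ : ℂ) (m j l : ℕ) :
    Wk q κ s ξ (m + l) j (m + j) l =
      (κ * s / ξ) ^ l * qp q (κ * s / ξ) m * qp q (κ⁻¹ * s * ξ) l / qp q (s ^ 2) (m + l) *
        (qp q q (m + l) / (qp q q m * qp q q l)) := by
  rw [Wk, if_pos ⟨by omega, by omega⟩, Nat.add_sub_cancel]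

lemma tendsto_Wk_add_add {q : ℂ} (κ s ξ : ℂ) (hq : ‖q‖ < 1)
    (hs : ∀ n : ℕ, 1 - s ^ 2 * q ^ n ≠ 0) (j l : ℕ) :
    Tendsto (fun m : ℕ => Wk q κ s ξ (m + l) j (m + j) l) atTop
      (𝓝 ((κ * s / ξ) ^ l * qpInf q (κ * s / ξ) / qpInf q (s ^ 2) *
        (qp q (κ⁻¹ * s * ξ) l / qp q q l))) := by
  have shifted (x : ℂ) : Tendsto (fun m => qp q x (m + l)) atTop (𝓝 (qpInf q x)) :=
    (tendsto_qp_qpInf x hq).comp (tendsto_add_atTop_nat l)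
  have hqq : qpInf q q ≠ 0 := qpInf_ne_zero q hq (one_sub_self_mul_pow_ne_zero hq)
  have hql := qp_self_ne_zero hq l
  have lim : Tendsto (fun m => (κ * s / ξ) ^ l * qp q (κ * s / ξ) m * qp q (κ⁻¹ * s * ξ) l /
      qp q (s ^ 2) (m + l) * (qp q q (m + l) / (qp q q m * qp q q l))) atTop
      (𝓝 ((κ * s / ξ) ^ l * qpInf q (κ * s / ξ) * qp q (κ⁻¹ * s * ξ) l /
        qpInf q (s ^ 2) * (qpInf q q / (qpInf q q * qp q q l)))) :=
    (((tendsto_const_nhds.mul (tendsto_qp_qpInf _ hq)).mul tendsto_const_nhds).div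
      (shifted _) (qpInf_ne_zero _ hq hs)).mul
      ((shifted q).div ((tendsto_qp_qpInf q hq).mul tendsto_const_nhds) (mul_ne_zero hqq hql))
  simp_rw [Wk_add_add]
  convert lim using 2
  field_simp

theorem stmt9_general (q κ s ξ : ℂ) (hq1 : ‖q‖ < 1)
    (hs : ∀ n : ℕ, 1 - s ^ 2 * q ^ n ≠ 0)
    (lam1 mu1 i Δ : ℕ) (hle : mu1 ≤ lam1) (hΔ : Δ = lam1 - mu1) :
    Filter.Tendsto (fun N : ℕ => Wk q κ s ξ (N - mu1) i (N - lam1 + i) Δ) Filter.atTop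
      (nhds ((κ * s / ξ) ^ Δ * qpInf q (κ * s / ξ) / qpInf q (s ^ 2) *
        (qp q (κ⁻¹ * s * ξ) Δ / qp q q Δ))) := by
  have reindex : (fun N : ℕ => Wk q κ s ξ ((N - lam1) + Δ) i ((N - lam1) + i) Δ) =ᶠ[atTop]
      fun N => Wk q κ s ξ (N - mu1) i (N - lam1 + i) Δ := by
    filter_upwards [eventually_ge_atTop lam1] with N hN
    rw [show N - lam1 + Δ = N - mu1 by omega]
  exact ((tendsto_Wk_add_add κ s ξ hq1 hs i Δ).comp (tendsto_sub_atTop_nat lam1)).congr' reindex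

/-- Limit of the q-Hahn weight: for fixed `Δ = λ₁ - μ₁` and `i`,
`W_{√(ξs/κ),s}(N-μ₁, i; N-λ₁+i, Δ) → (κs/ξ)^Δ (κs/ξ;q)_∞/(s²;q)_∞ ·
(κ⁻¹sξ;q)_Δ/(q;q)_Δ` as `N → ∞`, for `|q| < 1`. -/
theorem stmt9 (q κ s ξ : ℂ) (hq0 : 0 < ‖q‖) (hq1 : ‖q‖ < 1)
    (hξ : ξ ≠ 0) (hs : ∀ n : ℕ, 1 - s ^ 2 * q ^ n ≠ 0)
    (lam1 mu1 i Δ : ℕ) (hle : mu1 ≤ lam1) (hΔ : Δ = lam1 - mu1) :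
    Filter.Tendsto (fun N : ℕ => Wk q κ s ξ (N - mu1) i (N - lam1 + i) Δ) Filter.atTop
      (nhds ((κ * s / ξ) ^ Δ * qpInf q (κ * s / ξ) / qpInf q (s ^ 2) *
        (qp q (κ⁻¹ * s * ξ) Δ / qp q q Δ))) :=
  stmt9_general q κ s ξ hq1 hs lam1 mu1 i Δ hle hΔ
end

section
/- Simplification of the fused weight at u=s: substituting u = s into the fused weight formula 𝒲^{(J)}_{u;s}(i,j;k,l) = 𝟙_{i+j=k+l} u^{l-j} q^{iJ} s^{j+l} Σ_{p=0}^{min(j,k)} φ(k-p, k+l-p; suq^J, su) φ(p, j; sq^{-J}/u, q^{-J}), all summands with p ≠ j vanish, and after the analytic substitution q^J = t^{-2} one obtains 𝒲(i,j;k,l) = 𝟙_{i+j=k+l} 𝟙_{i≥l} (s/t)^{2l} (s²/t²;q)_{i-l}(t²;q)_l/(s²;q)_i · (q;q)_i/((q;q)_{i-l}(q;q)_l). -/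
/-- `φ(a,b;x,y) = (y/x)^a (x;q)_a (y/x;q)_{b-a}/(y;q)_b · (q;q)_b/((q;q)_a(q;q)_{b-a})`
for `0 ≤ a ≤ b` (and `0` otherwise). -/
noncomputable def phiW (q x y : ℂ) (a b : ℕ) : ℂ :=
  if a ≤ b then
    (y / x) ^ a * qp q x a * qp q (y / x) (b - a) / qp q y b *
      (qp q q b / (qp q q a * qp q q (b - a)))
  else 0

lemma qp_one_eq_zero (q : ℂ) (n : ℕ) (hn : 1 ≤ n) : qp q 1 n = 0 := by
  unfold qp
  apply Finset.prod_eq_zero (Finset.mem_range.2 hn)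
  simp

lemma qp_zero (q x : ℂ) : qp q x 0 = 1 := by simp [qp]

lemma qp_q_ne_zero (q : ℂ) (hq : ∀ n : ℕ, 1 ≤ n → q ^ n ≠ 1) (n : ℕ) :
    qp q q n ≠ 0 := by
  unfold qp
  apply Finset.prod_ne_zero_iff.2
  intro r _
  have := hq (r + 1) (by omega)
  rw [pow_succ'] at this
  intro h
  exact this (by linear_combination -h)

lemma phi_diag_zero (q t : ℂ) (ht : t ≠ 0) (p j : ℕ) (hpj : p < j) :
    phiW q (t ^ 2) (t ^ 2) p j = 0 := by
  have ht2 : t ^ 2 / t ^ 2 = 1 := div_self (pow_ne_zero 2 ht)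
  rw [phiW, if_pos hpj.le, ht2, qp_one_eq_zero q (j - p) (by omega)]
  ring

lemma phi_diag_one (q t : ℂ) (ht : t ≠ 0)
    (hq : ∀ n : ℕ, 1 ≤ n → q ^ n ≠ 1) (htp : ∀ n : ℕ, qp q (t ^ 2) n ≠ 0) (j : ℕ) :
    phiW q (t ^ 2) (t ^ 2) j j = 1 := by
  have ht2 : t ^ 2 / t ^ 2 = 1 := div_self (pow_ne_zero 2 ht)
  rw [phiW, if_pos le_rfl, ht2, Nat.sub_self, qp_zero, qp_zero, one_pow]
  field_simp [htp j, qp_q_ne_zero q hq j]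

/-- Simplification of the fused weight at `u = s` after the analytic substitution
`q^J = t^{-2}`:  (i) all summands with `p ≠ j` vanish, since
`φ(p,j;t²,t²)` contains the factor `(1;q)_{j-p} = 0` for `p < j`;
(ii) the fused weight
`𝟙_{i+j=k+l} s^{l-j} t^{-2i} s^{j+l} Σ_{p=0}^{min(j,k)} φ(k-p,k+l-p;s²t^{-2},s²)
 φ(p,j;t²,t²)`
equals the closed form
`𝟙_{i+j=k+l} 𝟙_{i≥l} (s/t)^{2l} (s²/t²;q)_{i-l}(t²;q)_l/(s²;q)_i ·
 (q;q)_i/((q;q)_{i-l}(q;q)_l)`. -/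
theorem stmt19 (q s t : ℂ) (hs : s ≠ 0) (ht : t ≠ 0)
    (hq : ∀ n : ℕ, 1 ≤ n → q ^ n ≠ 1)
    (hsp : ∀ n : ℕ, qp q (s ^ 2) n ≠ 0) (htp : ∀ n : ℕ, qp q (t ^ 2) n ≠ 0)
    (i j k l : ℕ) :
    (∀ p : ℕ, p < j → phiW q (t ^ 2) (t ^ 2) p j = 0) ∧
    ((if i + j = k + l then
        (s ^ l / s ^ j) * (t⁻¹) ^ (2 * i) * s ^ (j + l) *
          ∑ p ∈ Finset.range (min j k + 1),
            phiW q (s ^ 2 / t ^ 2) (s ^ 2) (k - p) (k + l - p) * phiW q (t ^ 2) (t ^ 2) p j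
      else 0)
      = if i + j = k + l ∧ l ≤ i then
          (s / t) ^ (2 * l) * qp q (s ^ 2 / t ^ 2) (i - l) * qp q (t ^ 2) l / qp q (s ^ 2) i *
            (qp q q i / (qp q q (i - l) * qp q q l))
        else 0) := by
  refine ⟨fun p hpj => phi_diag_zero q t ht p j hpj, ?_⟩
  by_cases h : i + j = k + l
  · rw [if_pos h]
    by_cases hjk : j ≤ k
    · -- only p = j survives
      have hli : l ≤ i := by omega
      rw [if_pos ⟨h, hli⟩]
      have hsum : (∑ p ∈ Finset.range (min j k + 1),
          phiW q (s ^ 2 / t ^ 2) (s ^ 2) (k - p) (k + l - p) * phiW q (t ^ 2) (t ^ 2) p j)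
          = phiW q (s ^ 2 / t ^ 2) (s ^ 2) (k - j) (k + l - j) := by
        rw [Finset.sum_eq_single_of_mem j
          (Finset.mem_range.2 (by omega))]
        · rw [phi_diag_one q t ht hq htp j, mul_one]
        · intro p hp hpj
          have : p < j := by
            have := Finset.mem_range.1 hp
            omega
          rw [phi_diag_zero q t ht p j this, mul_zero]
      rw [hsum]
      have e1 : k - j = i - l := by omega
      have e2 : k + l - j = i := by omega
      rw [e1, e2]
      obtain ⟨m, rfl⟩ : ∃ m, i = m + l := ⟨i - l, by omega⟩
      have e3 : m + l - l = m := by omega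
      have e4 : m + l - m = l := by omega
      rw [e3]
      rw [phiW, if_pos (by omega : m ≤ m + l), e4]
      have hyx : s ^ 2 / (s ^ 2 / t ^ 2) = t ^ 2 := by
        field_simp
      rw [hyx]
      have key2 : s ^ l / s ^ j * t⁻¹ ^ (2 * (m + l)) * s ^ (j + l) * (t ^ 2) ^ m
          = (s / t) ^ (2 * l) := by
        rw [inv_pow, div_pow, ← pow_mul]
        field_simp
        ring
      rw [← key2]
      ring
    · -- j > k : all summands vanish, both sides zero
      have hli : ¬ l ≤ i := by omega
      rw [if_neg (by tauto)]
      have hsum : (∑ p ∈ Finset.range (min j k + 1),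
          phiW q (s ^ 2 / t ^ 2) (s ^ 2) (k - p) (k + l - p) * phiW q (t ^ 2) (t ^ 2) p j)
          = 0 := by
        apply Finset.sum_eq_zero
        intro p hp
        have : p < j := by
          have := Finset.mem_range.1 hp
          omega
        rw [phi_diag_zero q t ht p j this, mul_zero]
      rw [hsum, mul_zero]
  · rw [if_neg h, if_neg (by tauto)]
end
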